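/- arXiv:2412.02652 — 4 statements merged into one kernel-verified Lean document; each statement's English description precedes it below -/
import Mathlib

section
/- For p an odd prime and g a nonzero non-square in Z/pZ, the number of triples (x,y,z) in (Z/pZ)^3 with x^2 + y^2 + z^2 = g equals p(p-1) if p ≡ 1 (mod 4), and p(p+1) if p ≡ 3 (mod 4). -/
open Finset

section aux

variable {p : ℕ} [Fact p.Prime]

lemma aux_char_ne_two (hodd : Odd p) : ringChar (ZMod p) ≠ 2 := by
  rw [ZMod.ringChar_zmod_n]
  rintro rfl
  exact (Nat.not_odd_iff_even.mpr (by decide)) hodd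

/-- fiberwise rewrite: sum of f over squares -/
lemma aux_sum_sq (f : ZMod p → ℤ) :
    ∑ z : ZMod p, f (z ^ 2) =
      ∑ t : ZMod p, ((univ.filter fun z : ZMod p => z ^ 2 = t).card : ℤ) * f t := by
  rw [← Finset.sum_fiberwise_of_maps_to (g := fun z : ZMod p => z ^ 2)
    (fun x _ => mem_univ _) (fun z => f (z ^ 2))]
  refine Finset.sum_congr rfl fun t _ => ?_
  have h : ∑ z ∈ filter (fun i : ZMod p => i ^ 2 = t) univ, f (z ^ 2)
       = ∑ _z ∈ filter (fun i : ZMod p => i ^ 2 = t) univ, f t :=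
    Finset.sum_congr rfl fun z hz => by rw [(Finset.mem_filter.mp hz).2]
  rw [h, Finset.sum_const, nsmul_eq_mul]

lemma aux_card_sqrts (hodd : Odd p) (a : ZMod p) :
    ((univ.filter fun z : ZMod p => z ^ 2 = a).card : ℤ) =
      quadraticChar (ZMod p) a + 1 := by
  classical
  have := quadraticChar_card_sqrts (aux_char_ne_two hodd) a
  rwa [Set.toFinset_setOf] at this

lemma aux_sum_shift (hodd : Odd p) (c : ZMod p) (hc : c ≠ 0) :
    ∑ z : ZMod p, quadraticChar (ZMod p) (c - z ^ 2) =
      - quadraticChar (ZMod p) (-1) := by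
  classical
  set χ := quadraticChar (ZMod p) with hχ
  have hF : ringChar (ZMod p) ≠ 2 := aux_char_ne_two hodd
  have h1 : ∑ z : ZMod p, χ (c - z ^ 2) =
      ∑ t : ZMod p, (χ t + 1) * χ (c - t) := by
    rw [aux_sum_sq (fun t => χ (c - t))]
    exact Finset.sum_congr rfl fun t _ => by rw [aux_card_sqrts hodd]
  have h2 : ∑ t : ZMod p, χ (c - t) = 0 := by
    have := Equiv.sum_comp (Equiv.subLeft c) (fun t => χ t)
    simp only [Equiv.subLeft_apply] at this
    rw [this]
    exact quadraticChar_sum_zero hF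
  have h3 : ∑ t : ZMod p, χ t * χ (c - t) = - χ (-1) := by
    have := jacobiSum_nontrivial_inv (quadraticChar_ne_one hF)
    rw [(quadraticChar_isQuadratic (ZMod p)).inv] at this
    have he := Equiv.sum_comp (Equiv.mulLeft₀ c hc) (fun t => χ t * χ (c - t))
    simp only [Equiv.mulLeft₀_apply] at he
    rw [← he]
    have key : ∀ s : ZMod p, χ (c * s) * χ (c - c * s) = χ s * χ (1 - s) := by
      intro s
      have : c - c * s = c * (1 - s) := by ring
      rw [this, map_mul, map_mul]
      have hc2 : χ c * χ c = 1 := by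
        rw [← pow_two]; exact quadraticChar_sq_one hc
      rw [show χ c * χ s * (χ c * χ (1 - s)) = (χ c * χ c) * (χ s * χ (1 - s)) by ring,
        hc2, one_mul]
    rw [Finset.sum_congr rfl (fun s (_ : s ∈ univ) => key s)]
    exact this
  rw [h1]
  rw [Finset.sum_congr rfl (fun t (_ : t ∈ univ) => (add_mul (χ t) 1 (χ (c - t))).trans (by rw [one_mul])),
    Finset.sum_add_distrib, h2, h3, add_zero]

end aux

theorem card_sum_three_squares_eq_nonsquare (p : ℕ) (hp : p.Prime) (hodd : Odd p)
    [Fact p.Prime] (g : ZMod p) (hg : g ≠ 0) (hns : ¬ ∃ x : ZMod p, x ^ 2 = g) :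
    {q : ZMod p × ZMod p × ZMod p | q.1 ^ 2 + q.2.1 ^ 2 + q.2.2 ^ 2 = g}.ncard =
      if p % 4 = 1 then p * (p - 1) else p * (p + 1) := by
  classical
  have hF : ringChar (ZMod p) ≠ 2 := aux_char_ne_two hodd
  set χ := quadraticChar (ZMod p) with hχ
  set N := {q : ZMod p × ZMod p × ZMod p | q.1 ^ 2 + q.2.1 ^ 2 + q.2.2 ^ 2 = g}.ncard with hN
  have h0 : N = Fintype.card
      {q : ZMod p × ZMod p × ZMod p // q.1 ^ 2 + q.2.1 ^ 2 + q.2.2 ^ 2 = g} := by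
    rw [hN, Set.ncard_eq_toFinset_card', Set.toFinset_card]
    rfl
  let e : {q : ZMod p × ZMod p × ZMod p // q.1 ^ 2 + q.2.1 ^ 2 + q.2.2 ^ 2 = g} ≃
      Σ yz : ZMod p × ZMod p, {x : ZMod p // x ^ 2 = g - yz.1 ^ 2 - yz.2 ^ 2} :=
    { toFun := fun q => ⟨q.1.2, q.1.1, by linear_combination q.2⟩
      invFun := fun s => ⟨(s.2.1, s.1.1, s.1.2), by linear_combination s.2.2⟩
      left_inv := fun q => rfl
      right_inv := fun s => rfl }
  have h1 : (N : ℤ) = (p : ℤ) ^ 2 - (p : ℤ) * χ (-1) := by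
    rw [h0, Fintype.card_congr e, Fintype.card_sigma]
    push_cast
    have h2 : ∀ yz : ZMod p × ZMod p,
        (Fintype.card {x : ZMod p // x ^ 2 = g - yz.1 ^ 2 - yz.2 ^ 2} : ℤ)
          = χ (g - yz.1 ^ 2 - yz.2 ^ 2) + 1 := by
      intro yz
      rw [Fintype.card_subtype, aux_card_sqrts hodd]
    rw [Finset.sum_congr rfl (fun yz (_ : yz ∈ univ) => h2 yz), Finset.sum_add_distrib]
    have h3 : ∑ yz : ZMod p × ZMod p, χ (g - yz.1 ^ 2 - yz.2 ^ 2) = - (p : ℤ) * χ (-1) := by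
      rw [Fintype.sum_prod_type]
      have h4 : ∀ y : ZMod p, ∑ z : ZMod p, χ (g - y ^ 2 - z ^ 2) = - χ (-1) := by
        intro y
        have hc : g - y ^ 2 ≠ 0 := by
          intro h
          exact hns ⟨y, by linear_combination -h⟩
        have := aux_sum_shift hodd (g - y ^ 2) hc
        exact this
      rw [Finset.sum_congr rfl (fun y (_ : y ∈ univ) => h4 y), Finset.sum_const,
        Finset.card_univ, ZMod.card, nsmul_eq_mul]
      ring
    rw [h3, Finset.sum_const, Finset.card_univ, Fintype.card_prod, ZMod.card, nsmul_eq_mul]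
    push_cast
    ring
  have hχ4 : χ (-1) = ZMod.χ₄ p := by
    rw [hχ, quadraticChar_neg_one hF, ZMod.card]
  have hp1 : 1 ≤ p := hp.one_le
  by_cases h4 : p % 4 = 1
  · rw [if_pos h4]
    have : χ (-1) = 1 := by rw [hχ4, ZMod.χ₄_nat_one_mod_four h4]
    rw [this] at h1
    have : ((p * (p - 1) : ℕ) : ℤ) = (p : ℤ) ^ 2 - (p : ℤ) * 1 := by
      push_cast [Nat.cast_sub hp1]
      ring
    exact_mod_cast h1.trans this.symm
  · rw [if_neg h4]
    have h43 : p % 4 = 3 := by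
      have := Nat.odd_iff.mp hodd
      omega
    have : χ (-1) = -1 := by rw [hχ4, ZMod.χ₄_nat_three_mod_four h43]
    rw [this] at h1
    have : ((p * (p + 1) : ℕ) : ℤ) = (p : ℤ) ^ 2 - (p : ℤ) * (-1) := by
      push_cast
      ring
    exact_mod_cast h1.trans this.symm
end

section
/- For p an odd prime, the number of nilpotent elements in the quaternion algebra H over Z/pZ (with i^2 = j^2 = -1, ij = k) is p^2, and every nonzero nilpotent element has nilpotency index 2. -/
open Quaternion

variable {p : ℕ}

lemma aux_two_ne_zero (hp : p.Prime) (hodd : Odd p) [Fact p.Prime] : (2 : ZMod p) ≠ 0 := by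
  intro h
  have hd : (p : ℕ) ∣ 2 := by
    have : ((2 : ℕ) : ZMod p) = 0 := by exact_mod_cast h
    exact (ZMod.natCast_eq_zero_iff 2 p).mp this
  have := (Nat.prime_dvd_prime_iff_eq hp Nat.prime_two).mp hd
  subst this
  simp [Nat.odd_iff] at hodd

lemma quat_sq {R : Type*} [CommRing R] (x : Quaternion R) :
    x ^ 2 = (2 * x.re) • x - ((normSq x : R) : Quaternion R) := by
  have h1 : x * star x = ((normSq x : R) : Quaternion R) := x.self_mul_star
  have h2 : star x = ((2 * x.re : R) : Quaternion R) - x := x.star_eq_two_re_sub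
  rw [h2, mul_sub, Quaternion.mul_coe_eq_smul] at h1
  rw [sq, eq_sub_iff_add_eq, add_comm]
  exact (sub_eq_iff_eq_add.mp h1).symm

lemma quat_sq_of_normSq_zero {R : Type*} [CommRing R] (x : Quaternion R)
    (h : normSq x = 0) : x ^ 2 = (2 * x.re) • x := by
  rw [quat_sq, h]
  simp

lemma quat_pow_formula {R : Type*} [CommRing R] (x : Quaternion R)
    (h : normSq x = 0) (n : ℕ) : x ^ (n + 1) = (2 * x.re) ^ n • x := by
  induction n with
  | zero => simp
  | succ n ih =>
    rw [pow_succ, ih, smul_mul_assoc, ← sq, quat_sq_of_normSq_zero x h, smul_smul, ← pow_succ]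

lemma quat_sq_zero {R : Type*} [CommRing R] (x : Quaternion R)
    (h1 : x.re = 0) (h2 : x.imI ^ 2 + x.imJ ^ 2 + x.imK ^ 2 = 0) : x ^ 2 = 0 := by
  have hn : normSq x = 0 := by
    rw [Quaternion.normSq_def', h1]
    linear_combination h2
  rw [quat_sq_of_normSq_zero x hn, h1]
  simp

lemma nilp_iff (hp : p.Prime) (hodd : Odd p) [Fact p.Prime] (x : Quaternion (ZMod p)) :
    IsNilpotent x ↔ x.re = 0 ∧ x.imI ^ 2 + x.imJ ^ 2 + x.imK ^ 2 = 0 := by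
  constructor
  · rintro ⟨n, hn⟩
    have hn0 : n ≠ 0 := by
      rintro rfl
      simp at hn
    have hns : normSq x = 0 := by
      have : normSq x ^ n = 0 := by rw [← map_pow, hn, map_zero]
      exact pow_eq_zero_iff hn0 |>.mp this
    rcases eq_or_ne x 0 with rfl | hx
    · simp
    · have hre : x.re = 0 := by
        obtain ⟨m, rfl⟩ := Nat.exists_eq_succ_of_ne_zero hn0
        rw [quat_pow_formula x hns m] at hn
        rcases smul_eq_zero.mp hn with h | h
        · have h2 : (2 : ZMod p) * x.re = 0 := (pow_eq_zero_iff'.mp h).1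
          rcases mul_eq_zero.mp h2 with h3 | h3
          · exact absurd h3 (aux_two_ne_zero hp hodd)
          · exact h3
        · exact absurd h hx
      refine ⟨hre, ?_⟩
      have := Quaternion.normSq_def' x
      rw [hns, hre] at this
      linear_combination -this
  · rintro ⟨h1, h2⟩
    exact ⟨2, quat_sq_zero x h1 h2⟩

def coneEquiv (p : ℕ) [Fact p.Prime] :
    {w : ZMod p × ZMod p × ZMod p // w.1 * w.2.1 = w.2.2 ^ 2} ≃
      (({a : ZMod p // a ≠ 0} × ZMod p) ⊕ ZMod p) where
  toFun w := if hx : w.1.1 = 0 then Sum.inr w.1.2.1 else Sum.inl (⟨w.1.1, hx⟩, w.1.2.2)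
  invFun s :=
    match s with
    | Sum.inl (⟨x, hx⟩, z) => ⟨(x, x⁻¹ * z ^ 2, z), by field_simp⟩
    | Sum.inr y => ⟨(0, y, 0), by ring⟩
  left_inv := by
    rintro ⟨⟨x, y, z⟩, h⟩
    by_cases hx : x = 0
    · subst hx
      simp only [dif_pos]
      have hz : z = 0 := by
        have hz2 : z ^ 2 = 0 := by rw [← h]; ring
        exact pow_eq_zero_iff two_ne_zero |>.mp hz2
      subst hz
      rfl
    · simp only [dif_neg hx]
      apply Subtype.ext
      simp only [Prod.mk.injEq]
      refine ⟨trivial, ?_, trivial⟩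
      field_simp
      linear_combination h.symm
  right_inv := by
    rintro (⟨⟨x, hx⟩, z⟩ | y)
    · simp only [dif_neg hx]
    · simp only [dif_pos]

def changeVar (p : ℕ) [Fact p.Prime] (hodd : Odd p) (u v : ZMod p)
    (huv : u ^ 2 + v ^ 2 = -1) :
    (ZMod p × ZMod p × ZMod p) ≃ (ZMod p × ZMod p × ZMod p) where
  toFun w := (w.1 + w.2.1, u * (w.1 - w.2.1) - 2 * v * w.2.2, v * (w.1 - w.2.1) + 2 * u * w.2.2)
  invFun w := ((2 : ZMod p)⁻¹ * (w.1 - u * w.2.1 - v * w.2.2),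
    (2 : ZMod p)⁻¹ * (w.1 + u * w.2.1 + v * w.2.2),
    (2 : ZMod p)⁻¹ * (v * w.2.1 - u * w.2.2))
  left_inv := by
    have h2 : (2 : ZMod p) ≠ 0 := aux_two_ne_zero Fact.out hodd
    rintro ⟨x, y, z⟩
    simp only [Prod.mk.injEq]
    refine ⟨?_, ?_, ?_⟩
    · field_simp
      linear_combination (y - x) * huv
    · field_simp
      linear_combination (x - y) * huv
    · field_simp
      linear_combination (-2 * z) * huv
  right_inv := by
    have h2 : (2 : ZMod p) ≠ 0 := aux_two_ne_zero Fact.out hodd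
    rintro ⟨b, c, d⟩
    simp only [Prod.mk.injEq]
    refine ⟨?_, ?_, ?_⟩
    · field_simp
      ring
    · field_simp
      linear_combination (-2 * c) * huv
    · field_simp
      linear_combination (-2 * d) * huv

lemma card_quad (p : ℕ) [Fact p.Prime] (hodd : Odd p) :
    Nat.card {w : ZMod p × ZMod p × ZMod p //
      w.1 ^ 2 + w.2.1 ^ 2 + w.2.2 ^ 2 = 0} = p ^ 2 := by
  obtain ⟨u, v, huv⟩ := ZMod.sq_add_sq p (-1)
  have h2 : (2 : ZMod p) ≠ 0 := aux_two_ne_zero Fact.out hodd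
  have h4 : (4 : ZMod p) ≠ 0 := by
    have := mul_ne_zero h2 h2
    norm_num at this ⊢
    exact this
  have hiff : ∀ w : ZMod p × ZMod p × ZMod p,
      w.1 * w.2.1 = w.2.2 ^ 2 ↔
      ((changeVar p hodd u v huv) w).1 ^ 2 + ((changeVar p hodd u v huv) w).2.1 ^ 2 +
        ((changeVar p hodd u v huv) w).2.2 ^ 2 = 0 := by
    rintro ⟨x, y, z⟩
    simp only [changeVar, Equiv.coe_fn_mk]
    constructor
    · intro h
      linear_combination 4 * h + ((x - y) ^ 2 + 4 * z ^ 2) * huv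
    · intro h
      have key : (4 : ZMod p) * (x * y - z ^ 2) = 0 := by
        linear_combination h - ((x - y) ^ 2 + 4 * z ^ 2) * huv
      rcases mul_eq_zero.mp key with h' | h'
      · exact absurd h' h4
      · linear_combination h'
  rw [Nat.card_congr (((changeVar p hodd u v huv).subtypeEquiv hiff).symm.trans (coneEquiv p)),
    Nat.card_sum, Nat.card_prod, Nat.card_zmod]
  have hne : Nat.card {a : ZMod p // a ≠ 0} = p - 1 := by
    rw [Nat.card_eq_fintype_card, Fintype.card_subtype_compl, ZMod.card,
      Fintype.card_subtype_eq (0 : ZMod p)]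
  rw [hne]
  have hp : p.Prime := Fact.out
  obtain ⟨q, rfl⟩ : ∃ q, p = q + 1 := ⟨p - 1, (Nat.succ_pred_eq_of_pos hp.pos).symm⟩
  simp only [Nat.add_sub_cancel]
  ring

def quatPtEquiv (p : ℕ) [Fact p.Prime] :
    {x : Quaternion (ZMod p) // x.re = 0 ∧ x.imI ^ 2 + x.imJ ^ 2 + x.imK ^ 2 = 0} ≃
      {w : ZMod p × ZMod p × ZMod p // w.1 ^ 2 + w.2.1 ^ 2 + w.2.2 ^ 2 = 0} where
  toFun x := ⟨(x.1.imI, x.1.imJ, x.1.imK), x.2.2⟩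
  invFun v := ⟨⟨0, v.1.1, v.1.2.1, v.1.2.2⟩, rfl, v.2⟩
  left_inv := by
    rintro ⟨⟨r, a, b, c⟩, h1, h2⟩
    exact Subtype.ext (QuaternionAlgebra.ext h1.symm rfl rfl rfl)
  right_inv := by
    rintro ⟨⟨a, b, c⟩, h⟩
    rfl

theorem card_nilpotent_quaternions (p : ℕ) (hp : p.Prime) (hodd : Odd p) [Fact p.Prime] :
    {x : Quaternion (ZMod p) | IsNilpotent x}.ncard = p ^ 2 ∧
    ∀ x : Quaternion (ZMod p), IsNilpotent x → x ≠ 0 → x ^ 2 = 0 := by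
  constructor
  · rw [← Nat.card_coe_set_eq]
    have e1 : {x : Quaternion (ZMod p) | IsNilpotent x} ≃
        {x : Quaternion (ZMod p) // x.re = 0 ∧ x.imI ^ 2 + x.imJ ^ 2 + x.imK ^ 2 = 0} :=
      Equiv.subtypeEquivRight fun x => nilp_iff hp hodd x
    rw [Nat.card_congr (e1.trans (quatPtEquiv p))]
    exact card_quad p hodd
  · intro x hx _
    obtain ⟨h1, h2⟩ := (nilp_iff hp hodd x).mp hx
    exact quat_sq_zero x h1 h2
end

section
/- For p an odd prime, the number of idempotent elements (x^2 = x, including 0 and 1) in the quaternion algebra over Z/pZ is p^2 + p + 2. -/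
open Finset

variable {p : ℕ} [Fact p.Prime]

local notation "χ" => quadraticChar (ZMod p)

lemma card_sqrts (hp2 : (ringChar (ZMod p)) ≠ 2) (a : ZMod p) :
    ((univ.filter (fun x : ZMod p => x ^ 2 = a)).card : ℤ) = χ a + 1 := by
  have := quadraticChar_card_sqrts hp2 a
  rwa [Set.toFinset_setOf] at this

lemma sum_sq_comp (hp2 : (ringChar (ZMod p)) ≠ 2) (f : ZMod p → ℤ) :
    ∑ x : ZMod p, f (x ^ 2) = ∑ u : ZMod p, (χ u + 1) * f u := by
  rw [← Finset.sum_fiberwise' univ (fun x : ZMod p => x ^ 2) f]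
  refine Finset.sum_congr rfl fun u _ => ?_
  rw [Finset.sum_const, ← card_sqrts hp2 u]
  simp [mul_comm]

lemma sum_shift_zero (hp2 : (ringChar (ZMod p)) ≠ 2) (t : ZMod p) :
    ∑ u : ZMod p, χ (t - u) = 0 := by
  have h := Fintype.sum_equiv (Equiv.subLeft t) (fun u => χ (t - u)) (fun u => χ u) (fun u => rfl)
  rw [h]
  exact quadraticChar_sum_zero hp2

lemma sum_J (hp2 : (ringChar (ZMod p)) ≠ 2) {t : ZMod p} (ht : t ≠ 0) :
    ∑ x : ZMod p, χ x * χ (t - x) = -(χ (-1)) := by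
  have h0 : (fun x : ZMod p => χ x * χ (t - x)) 0 = 0 := by simp
  rw [show (∑ x : ZMod p, χ x * χ (t - x)) = ∑ x ∈ univ.erase 0, χ x * χ (t - x) from
    (Finset.sum_erase (f := fun x => χ x * χ (t - x)) univ h0).symm]
  have step1 : ∑ x ∈ univ.erase (0 : ZMod p), χ x * χ (t - x)
      = ∑ x ∈ univ.erase (0 : ZMod p), χ (t * x⁻¹ - 1) := by
    refine Finset.sum_congr rfl fun x hx => ?_
    have hx0 : x ≠ 0 := (Finset.mem_erase.mp hx).1
    have key : x * (t - x) = x ^ 2 * (t * x⁻¹ - 1) := by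
      field_simp
    rw [← map_mul, key, map_mul, quadraticChar_sq_one' hx0, one_mul]
  rw [step1]
  have step2 : ∑ x ∈ univ.erase (0 : ZMod p), χ (t * x⁻¹ - 1)
      = ∑ y ∈ univ.erase (0 : ZMod p), χ (y - 1) := by
    refine Finset.sum_nbij' (fun x => t * x⁻¹) (fun y => t * y⁻¹) ?_ ?_ ?_ ?_ ?_
    · intro x hx
      have hx0 : x ≠ 0 := (Finset.mem_erase.mp hx).1
      simp [Finset.mem_erase, mul_ne_zero ht (inv_ne_zero hx0)]
    · intro y hy
      have hy0 : y ≠ 0 := (Finset.mem_erase.mp hy).1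
      simp [Finset.mem_erase, mul_ne_zero ht (inv_ne_zero hy0)]
    · intro x hx
      have hx0 : x ≠ 0 := (Finset.mem_erase.mp hx).1
      field_simp
    · intro y hy
      have hy0 : y ≠ 0 := (Finset.mem_erase.mp hy).1
      field_simp
    · intro x hx; rfl
  rw [step2]
  have step3 : ∑ y ∈ univ.erase (0 : ZMod p), χ (y - 1)
      = ∑ z ∈ univ.erase (-1 : ZMod p), χ z := by
    refine Finset.sum_nbij' (fun y => y - 1) (fun z => z + 1) ?_ ?_ ?_ ?_ ?_
    · intro y hy
      have hy0 : y ≠ 0 := (Finset.mem_erase.mp hy).1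
      simp [Finset.mem_erase, sub_eq_iff_eq_add]
      intro h; exact hy0 (by linear_combination h)
    · intro z hz
      have hz0 : z ≠ -1 := (Finset.mem_erase.mp hz).1
      simp [Finset.mem_erase]
      intro h; exact hz0 (by linear_combination h)
    · intro y _; ring
    · intro z _; ring
    · intro y _; rfl
  rw [step3]
  have := quadraticChar_sum_zero (F := ZMod p) hp2
  have h4 : ∑ z ∈ univ.erase (-1 : ZMod p), χ z = (∑ z : ZMod p, χ z) - χ (-1) := by
    rw [← Finset.add_sum_erase univ _ (Finset.mem_univ (-1 : ZMod p))]
    ring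
  rw [h4, this]; ring

lemma sum_T (hp2 : (ringChar (ZMod p)) ≠ 2) {t : ZMod p} (ht : t ≠ 0) :
    ∑ x : ZMod p, χ (t - x ^ 2) = -(χ (-1)) := by
  rw [sum_sq_comp hp2 (fun u => χ (t - u))]
  have : ∀ u : ZMod p, (χ u + 1) * χ (t - u) = χ u * χ (t - u) + χ (t - u) := by
    intro u; ring
  rw [Finset.sum_congr rfl fun u _ => this u, Finset.sum_add_distrib,
    sum_J hp2 ht, sum_shift_zero hp2 t, add_zero]

lemma sum_T0 (hp2 : (ringChar (ZMod p)) ≠ 2) :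
    ∑ x : ZMod p, χ ((0 : ZMod p) - x ^ 2) = ((p : ℤ) - 1) * χ (-1) := by
  have h0 : χ ((0 : ZMod p) - 0 ^ 2) = 0 := by simp
  rw [show (∑ x : ZMod p, χ ((0:ZMod p) - x ^ 2))
      = ∑ x ∈ univ.erase 0, χ ((0:ZMod p) - x ^ 2) from
    (Finset.sum_erase (f := fun x : ZMod p => χ ((0:ZMod p) - x ^ 2)) univ h0).symm]
  have : ∀ x ∈ univ.erase (0 : ZMod p), χ ((0:ZMod p) - x ^ 2) = χ (-1) := by
    intro x hx
    have hx0 : x ≠ 0 := (Finset.mem_erase.mp hx).1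
    rw [zero_sub, show -x ^ 2 = (-1) * x ^ 2 by ring, map_mul,
      quadraticChar_sq_one' hx0, mul_one]
  rw [Finset.sum_congr rfl this, Finset.sum_const, Finset.card_erase_of_mem (mem_univ _),
    Finset.card_univ, ZMod.card]
  rw [nsmul_eq_mul]
  congr 1
  have h1 : 1 ≤ p := (Nat.Prime.one_lt (Fact.out)).le
  push_cast [Nat.cast_sub h1]
  ring

lemma card_two (hp2 : (ringChar (ZMod p)) ≠ 2) (t : ZMod p) :
    ((univ.filter (fun v : ZMod p × ZMod p => v.1 ^ 2 + v.2 ^ 2 = t)).card : ℤ)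
      = (p : ℤ) + ∑ x : ZMod p, χ (t - x ^ 2) := by
  rw [Finset.card_filter]
  rw [Fintype.sum_prod_type]
  push_cast
  have : ∀ x : ZMod p, (∑ y : ZMod p, if x ^ 2 + y ^ 2 = t then (1 : ℤ) else 0)
      = 1 + χ (t - x ^ 2) := by
    intro x
    have he : (univ.filter (fun y : ZMod p => y ^ 2 = t - x ^ 2))
        = univ.filter (fun y : ZMod p => x ^ 2 + y ^ 2 = t) := by
      apply Finset.filter_congr
      intro y _
      constructor
      · intro h; rw [h]; ring
      · intro h; rw [← h]; ring
    have := card_sqrts hp2 (t - x ^ 2)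
    rw [he] at this
    rw [← Finset.sum_filter (fun y : ZMod p => x ^ 2 + y ^ 2 = t) (fun _ => (1:ℤ))]
    rw [Finset.sum_const, nsmul_eq_mul, mul_one, this]
    ring
  rw [Finset.sum_congr rfl fun x _ => this x, Finset.sum_add_distrib]
  simp [ZMod.card]

lemma chi_sq_self (hp2 : (ringChar (ZMod p)) ≠ 2) : χ (-1) * χ (-1) = 1 := by
  rw [← map_mul, neg_mul_neg, mul_one, map_one]

lemma card_three (hp2 : (ringChar (ZMod p)) ≠ 2) {s : ZMod p} (hs : s ≠ 0) :
    ((univ.filter (fun v : ZMod p × ZMod p × ZMod p =>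
        v.1 ^ 2 + v.2.1 ^ 2 + v.2.2 ^ 2 = s)).card : ℤ)
      = (p : ℤ) ^ 2 + (p : ℤ) * χ (-s) := by
  have key : ∀ b : ZMod p,
      (∑ v : ZMod p × ZMod p, if b ^ 2 + v.1 ^ 2 + v.2 ^ 2 = s then (1:ℤ) else 0)
        = (p : ℤ) + ∑ x : ZMod p, χ ((s - b ^ 2) - x ^ 2) := by
    intro b
    have he : (univ.filter (fun v : ZMod p × ZMod p => v.1 ^ 2 + v.2 ^ 2 = s - b ^ 2))
        = univ.filter (fun v : ZMod p × ZMod p => b ^ 2 + v.1 ^ 2 + v.2 ^ 2 = s) := by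
      apply Finset.filter_congr
      intro v _
      constructor
      · intro h; rw [eq_sub_iff_add_eq] at h; rw [← h]; ring
      · intro h; rw [eq_sub_iff_add_eq]; rw [← h]; ring
    have h2 := card_two hp2 (s - b ^ 2)
    rw [he] at h2
    rw [← Finset.sum_filter (fun v : ZMod p × ZMod p => b ^ 2 + v.1 ^ 2 + v.2 ^ 2 = s)
      (fun _ => (1:ℤ)), Finset.sum_const, nsmul_eq_mul, mul_one, h2]
  have hTA : ∀ b : ZMod p, b ^ 2 = s →
      (∑ x : ZMod p, χ ((s - b ^ 2) - x ^ 2)) = ((p : ℤ) - 1) * χ (-1) := by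
    intro b hb
    rw [hb, sub_self]
    exact sum_T0 hp2
  have hTB : ∀ b : ZMod p, ¬ b ^ 2 = s →
      (∑ x : ZMod p, χ ((s - b ^ 2) - x ^ 2)) = -(χ (-1)) := by
    intro b hb
    exact sum_T hp2 (sub_ne_zero_of_ne (fun h => hb h.symm))
  have hsplit := Finset.sum_filter_add_sum_filter_not (univ : Finset (ZMod p))
    (fun b => b ^ 2 = s) (fun b => ∑ x : ZMod p, χ ((s - b ^ 2) - x ^ 2))
  have hA : ∑ b ∈ univ.filter (fun b : ZMod p => b ^ 2 = s),
      (∑ x : ZMod p, χ ((s - b ^ 2) - x ^ 2)) = (χ s + 1) * (((p : ℤ) - 1) * χ (-1)) := by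
    rw [Finset.sum_congr rfl (fun b hb => hTA b (Finset.mem_filter.mp hb).2),
      Finset.sum_const, nsmul_eq_mul, ← card_sqrts hp2 s]
  have hB : ∑ b ∈ univ.filter (fun b : ZMod p => ¬ b ^ 2 = s),
      (∑ x : ZMod p, χ ((s - b ^ 2) - x ^ 2)) = ((p : ℤ) - (χ s + 1)) * (-(χ (-1))) := by
    rw [Finset.sum_congr rfl (fun b hb => hTB b (Finset.mem_filter.mp hb).2),
      Finset.sum_const, nsmul_eq_mul]
    have hcard := Finset.card_filter_add_card_filter_not
      (s := (univ : Finset (ZMod p))) (p := fun b : ZMod p => b ^ 2 = s)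
    rw [Finset.card_univ, ZMod.card] at hcard
    have hcs := card_sqrts hp2 s
    have : ((univ.filter (fun b : ZMod p => ¬ b ^ 2 = s)).card : ℤ)
        = (p : ℤ) - (χ s + 1) := by omega
    rw [this]
  rw [Finset.card_filter, Fintype.sum_prod_type]
  push_cast
  rw [Finset.sum_congr rfl fun b _ => key b, Finset.sum_add_distrib, Finset.sum_const,
    Finset.card_univ, ZMod.card, nsmul_eq_mul, ← hsplit, hA, hB]
  have hsq := chi_sq_self hp2
  have hneg : χ (-s) = χ (-1) * χ s := by rw [← map_mul, neg_one_mul]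
  rw [hneg]
  have hsq' : χ (-1) ^ 2 = 1 := by rw [sq, ← map_mul, neg_mul_neg, mul_one, map_one]
  ring_nf

lemma card_three_spec (hp2 : (ringChar (ZMod p)) ≠ 2) :
    (univ.filter (fun v : ZMod p × ZMod p × ZMod p =>
        v.1 ^ 2 + v.2.1 ^ 2 + v.2.2 ^ 2 = -((4 : ZMod p)⁻¹))).card = p ^ 2 + p := by
  have h2 : (2 : ZMod p) ≠ 0 := Ring.two_ne_zero hp2
  have h2i : (2 : ZMod p)⁻¹ ≠ 0 := inv_ne_zero h2
  have h4 : ((4 : ZMod p))⁻¹ = ((2 : ZMod p)⁻¹) ^ 2 := by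
    rw [show (4 : ZMod p) = 2 ^ 2 by norm_num, ← inv_pow]
  have hs : -((4 : ZMod p)⁻¹) ≠ 0 := by
    rw [h4]
    exact neg_ne_zero.mpr (pow_ne_zero 2 h2i)
  have := card_three hp2 hs
  have hchi : χ (-(-((4 : ZMod p)⁻¹))) = 1 := by
    rw [neg_neg, h4]
    exact quadraticChar_sq_one' h2i
  rw [hchi, mul_one] at this
  have : ((univ.filter (fun v : ZMod p × ZMod p × ZMod p =>
      v.1 ^ 2 + v.2.1 ^ 2 + v.2.2 ^ 2 = -((4 : ZMod p)⁻¹))).card : ℤ) = (p : ℤ) ^ 2 + p := this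
  exact_mod_cast this

instance : DecidableEq (Quaternion (ZMod p)) :=
  (QuaternionAlgebra.equivProd (-1 : ZMod p) 0 (-1)).decidableEq

theorem card_idempotent_quaternions' (hp : p.Prime) (hodd : Odd p) :
    {x : Quaternion (ZMod p) | x ^ 2 = x}.ncard = p ^ 2 + p + 2 := by
  have hp2 : (ringChar (ZMod p)) ≠ 2 := by
    rw [ZMod.ringChar_zmod_n]
    intro h
    rw [h] at hodd
    exact (by decide : ¬ Odd 2) hodd
  have h2 : (2 : ZMod p) ≠ 0 := Ring.two_ne_zero hp2
  set f : ZMod p × ZMod p × ZMod p → Quaternion (ZMod p) :=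
    fun v => ⟨(2 : ZMod p)⁻¹, v.1, v.2.1, v.2.2⟩ with hf
  set sols : Finset (ZMod p × ZMod p × ZMod p) :=
    univ.filter (fun v : ZMod p × ZMod p × ZMod p =>
      v.1 ^ 2 + v.2.1 ^ 2 + v.2.2 ^ 2 = -((4 : ZMod p)⁻¹)) with hsols
  have hinv2 : (2 : ZMod p)⁻¹ * 2 = 1 := inv_mul_cancel₀ h2
  have h4 : ((4 : ZMod p))⁻¹ = ((2 : ZMod p)⁻¹) ^ 2 := by
    rw [show (4 : ZMod p) = 2 ^ 2 by norm_num, ← inv_pow]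
  have hSet : {x : Quaternion (ZMod p) | x ^ 2 = x}
      = ↑(insert (0 : Quaternion (ZMod p)) (insert 1 (sols.image f))) := by
    ext x
    simp only [Set.mem_setOf_eq, Finset.coe_insert, Set.mem_insert_iff, Finset.coe_image,
      Set.mem_image, Finset.mem_coe, Finset.mem_image, hsols, Finset.mem_filter, Finset.mem_univ,
      true_and]
    constructor
    · intro hx
      rw [pow_two] at hx
      have hre := congrArg QuaternionAlgebra.re hx
      have hI := congrArg QuaternionAlgebra.imI hx
      have hJ := congrArg QuaternionAlgebra.imJ hx
      have hK := congrArg QuaternionAlgebra.imK hx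
      rw [Quaternion.re_mul] at hre
      rw [Quaternion.imI_mul] at hI
      rw [Quaternion.imJ_mul] at hJ
      rw [Quaternion.imK_mul] at hK
      by_cases hall : x.imI = 0 ∧ x.imJ = 0 ∧ x.imK = 0
      · obtain ⟨hb, hc, hd⟩ := hall
        rw [hb, hc, hd] at hre
        have ha : x.re = 0 ∨ x.re = 1 := by
          rcases mul_eq_zero.mp (show x.re * (x.re - 1) = 0 by linear_combination hre) with h | h
          · exact Or.inl h
          · exact Or.inr (by linear_combination h)
        rcases ha with h | h
        · left; ext <;> simp [h, hb, hc, hd] <;> rfl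
        · right; left; ext <;> simp [h, hb, hc, hd] <;> rfl
      · have h2a : 2 * x.re = 1 := by
          by_contra h2a
          have h2a' : 2 * x.re - 1 ≠ 0 := fun hh => h2a (by linear_combination hh)
          apply hall
          refine ⟨?_, ?_, ?_⟩
          · have : x.imI * (2 * x.re - 1) = 0 := by linear_combination hI
            exact (mul_eq_zero.mp this).resolve_right h2a'
          · have : x.imJ * (2 * x.re - 1) = 0 := by linear_combination hJ
            exact (mul_eq_zero.mp this).resolve_right h2a'
          · have : x.imK * (2 * x.re - 1) = 0 := by linear_combination hK
            exact (mul_eq_zero.mp this).resolve_right h2a'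
        have ha : x.re = (2 : ZMod p)⁻¹ := by
          field_simp
          linear_combination h2a
        right; right
        refine ⟨(x.imI, x.imJ, x.imK), ?_, ?_⟩
        · rw [h4]
          have hsum : x.imI ^ 2 + x.imJ ^ 2 + x.imK ^ 2 = x.re * x.re - x.re := by
            linear_combination -hre
          rw [hsum, ha]
          field_simp
          try ring
        · rw [hf]
          ext <;> simp [ha]
    · rintro (rfl | rfl | ⟨v, hv, rfl⟩)
      · simp
      · simp
      · rw [pow_two]
        obtain ⟨b, c, d⟩ := v
        simp only [hf]
        have hv' : b ^ 2 + c ^ 2 + d ^ 2 = -((4 : ZMod p)⁻¹) := hv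
        ext
        · refine (Quaternion.re_mul _ _).trans ?_
          show (2:ZMod p)⁻¹ * (2:ZMod p)⁻¹ - b * b - c * c - d * d = (2:ZMod p)⁻¹
          rw [h4] at hv'
          linear_combination -hv' + (2 : ZMod p)⁻¹ * hinv2
        · refine (Quaternion.imI_mul _ _).trans ?_
          show (2:ZMod p)⁻¹ * b + b * (2:ZMod p)⁻¹ + c * d - d * c = b
          linear_combination b * hinv2
        · refine (Quaternion.imJ_mul _ _).trans ?_
          show (2:ZMod p)⁻¹ * c - b * d + c * (2:ZMod p)⁻¹ + d * b = c
          linear_combination c * hinv2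
        · refine (Quaternion.imK_mul _ _).trans ?_
          show (2:ZMod p)⁻¹ * d + b * c - c * b + d * (2:ZMod p)⁻¹ = d
          linear_combination d * hinv2
  rw [hSet, Set.ncard_coe_finset]
  have hfinj : Set.InjOn f sols := by
    intro v _ w _ hvw
    have h1 := congrArg QuaternionAlgebra.imI hvw
    have h2' := congrArg QuaternionAlgebra.imJ hvw
    have h3 := congrArg QuaternionAlgebra.imK hvw
    exact Prod.ext h1 (Prod.ext h2' h3)
  have hinv1 : ((2 : ZMod p)⁻¹ : ZMod p) ≠ 1 := by
    intro hh
    have h12 : (1 : ZMod p) = 2 := by rw [← hinv2, hh, one_mul]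
    exact one_ne_zero (α := ZMod p) (by linear_combination -h12)
  have hinv0 : ((2 : ZMod p)⁻¹ : ZMod p) ≠ 0 := inv_ne_zero h2
  have h1ni : (1 : Quaternion (ZMod p)) ∉ sols.image f := by
    simp only [Finset.mem_image, not_exists]
    rintro v ⟨hv, hfv⟩
    exact hinv1 (congrArg QuaternionAlgebra.re hfv)
  have h0ni : (0 : Quaternion (ZMod p)) ∉ insert 1 (sols.image f) := by
    simp only [Finset.mem_insert, Finset.mem_image]
    rintro (h | ⟨v, hv, hfv⟩)
    · exact one_ne_zero h.symm
    · exact hinv0 (congrArg QuaternionAlgebra.re hfv)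
  rw [Finset.card_insert_of_notMem h0ni, Finset.card_insert_of_notMem h1ni,
    Finset.card_image_of_injOn hfinj, hsols, card_three_spec hp2]

theorem card_idempotent_quaternions (p : ℕ) (hp : p.Prime) (hodd : Odd p) [Fact p.Prime] :
    {x : Quaternion (ZMod p) | x ^ 2 = x}.ncard = p ^ 2 + p + 2 := by
  exact card_idempotent_quaternions' hp hodd
end

section
/- For p an odd prime, the number of tripotent elements (x^3 = x and x^2 ≠ x) in the quaternion algebra over Z/pZ is 2p^2 + 2p + 1. -/
open Finset Quaternion

variable {p : ℕ} [Fact p.Prime]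

lemma card_sq (hp2 : (ringChar (ZMod p)) ≠ 2) (a : ZMod p) :
    ((univ.filter fun x : ZMod p => x ^ 2 = a).card : ℤ) = quadraticChar (ZMod p) a + 1 := by
  have := quadraticChar_card_sqrts hp2 a
  rw [← this]
  congr 1
  simp [Set.toFinset_setOf]

lemma card_hyperbola (hp2 : (ringChar (ZMod p)) ≠ 2) {m : ZMod p} (hm : m ≠ 0) :
    (univ.filter fun v : ZMod p × ZMod p => v.1 ^ 2 - v.2 ^ 2 = m).card = p - 1 := by
  have h2 : (2 : ZMod p) ≠ 0 := Ring.two_ne_zero hp2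
  have key : (univ.filter fun v : ZMod p × ZMod p => v.1 ^ 2 - v.2 ^ 2 = m).card
      = (univ.erase (0 : ZMod p)).card := by
    apply Finset.card_bij (fun v _ => v.1 + v.2)
    · rintro ⟨x, y⟩ hv
      simp only [mem_filter, mem_univ, true_and] at hv
      simp only [mem_erase, mem_univ, and_true]
      intro h
      apply hm
      rw [← hv]
      have hx : x = -y := by linear_combination h
      rw [hx]; ring
    · rintro ⟨x, y⟩ hv ⟨x', y'⟩ hv' h
      simp only [mem_filter, mem_univ, true_and] at hv hv'
      simp only at h
      have hxy : x + y ≠ 0 := by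
        intro h0
        apply hm; rw [← hv]
        have hx : x = -y := by linear_combination h0
        rw [hx]; ring
      have hd : x - y = m / (x + y) := by
        field_simp
        linear_combination hv
      have hd' : x' - y' = m / (x' + y') := by
        field_simp [h ▸ hxy]
        linear_combination hv'
      have hdd : x - y = x' - y' := by rw [hd, hd', h]
      have h1 : x = x' := by
        have : 2 * x = 2 * x' := by linear_combination h + hdd
        exact mul_left_cancel₀ h2 this
      have h2' : y = y' := by
        have : 2 * y = 2 * y' := by linear_combination h - hdd
        exact mul_left_cancel₀ h2 this
      simp [h1, h2', Prod.ext_iff]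
    · intro u hu
      simp only [mem_erase, mem_univ, and_true] at hu
      refine ⟨((u + m / u) / 2, (u - m / u) / 2), ?_, ?_⟩
      · simp only [mem_filter, mem_univ, true_and]
        field_simp
        ring
      · field_simp
        ring
  rw [key, card_erase_of_mem (mem_univ _), card_univ, ZMod.card]

lemma sum_char_sq_sub (hp2 : (ringChar (ZMod p)) ≠ 2) (m : ZMod p) :
    ∑ x : ZMod p, (quadraticChar (ZMod p) (x ^ 2 - m) : ℤ)
      = if m = 0 then (p : ℤ) - 1 else -1 := by
  by_cases hm : m = 0
  · simp only [hm, if_true, sub_zero]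
    have : ∀ x : ZMod p, (quadraticChar (ZMod p) (x ^ 2) : ℤ) = if x = 0 then 0 else 1 := by
      intro x
      by_cases hx : x = 0
      · simp [hx]
      · simp [hx, quadraticChar_sq_one' hx]
    rw [Finset.sum_congr rfl fun x _ => this x]
    rw [Finset.sum_ite, Finset.sum_const, Finset.sum_const]
    have hp1 : 1 ≤ p := (Fact.out : p.Prime).one_lt.le
    simp [Finset.filter_ne', Finset.card_erase_of_mem, ZMod.card, Nat.cast_sub hp1]
  · rw [if_neg hm]
    have key : ∑ x : ZMod p, ((quadraticChar (ZMod p) (x ^ 2 - m) : ℤ) + 1)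
        = ((univ.filter fun v : ZMod p × ZMod p => v.1 ^ 2 - v.2 ^ 2 = m).card : ℤ) := by
      have : ∀ x : ZMod p, (quadraticChar (ZMod p) (x ^ 2 - m) : ℤ) + 1
          = ((univ.filter fun y : ZMod p => y ^ 2 = x ^ 2 - m).card : ℤ) := fun x =>
        (card_sq hp2 _).symm
      rw [Finset.sum_congr rfl fun x _ => this x]
      rw [← Finset.univ_product_univ, Finset.card_filter, Finset.sum_product]
      push_cast
      congr 1
      ext x
      rw [Finset.card_filter]
      push_cast
      congr 1
      ext y
      congr 1
      rw [eq_iff_iff]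
      constructor
      · intro h; linear_combination -h
      · intro h; linear_combination -h
    rw [Finset.sum_add_distrib, Finset.sum_const, card_univ, ZMod.card] at key
    rw [card_hyperbola hp2 hm] at key
    have hp1 : 1 ≤ p := (Fact.out : p.Prime).one_lt.le
    push_cast [Nat.cast_sub hp1] at key
    rw [nsmul_eq_mul, mul_one] at key
    linarith

lemma sum_char_two (hp2 : (ringChar (ZMod p)) ≠ 2) (a : ZMod p) :
    ∑ c : ZMod p, ∑ d : ZMod p, (quadraticChar (ZMod p) (a - c ^ 2 - d ^ 2) : ℤ)
      = (quadraticChar (ZMod p) (-1) : ℤ) * (quadraticChar (ZMod p) a : ℤ) * p := by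
  have inner : ∀ c : ZMod p, ∑ d : ZMod p, (quadraticChar (ZMod p) (a - c ^ 2 - d ^ 2) : ℤ)
      = (quadraticChar (ZMod p) (-1) : ℤ) * (if a - c ^ 2 = 0 then (p : ℤ) - 1 else -1) := by
    intro c
    have : ∀ d : ZMod p, (quadraticChar (ZMod p) (a - c ^ 2 - d ^ 2) : ℤ)
        = (quadraticChar (ZMod p) (-1) : ℤ) * (quadraticChar (ZMod p) (d ^ 2 - (a - c ^ 2)) : ℤ) := by
      intro d
      rw [← map_mul]
      congr 1
      ring
    rw [Finset.sum_congr rfl fun d _ => this d, ← Finset.mul_sum,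
      sum_char_sq_sub hp2 (a - c ^ 2)]
  rw [Finset.sum_congr rfl fun c _ => inner c, ← Finset.mul_sum]
  have split : ∑ c : ZMod p, (if a - c ^ 2 = 0 then (p : ℤ) - 1 else -1)
      = (quadraticChar (ZMod p) a : ℤ) * p := by
    have hcond : ∀ c : ZMod p, (a - c ^ 2 = 0) = (c ^ 2 = a) := by
      intro c; rw [eq_iff_iff, sub_eq_zero, eq_comm]
    simp only [hcond]
    rw [Finset.sum_ite, Finset.sum_const, Finset.sum_const]
    have hcard := card_sq hp2 a
    have hle : (univ.filter fun x : ZMod p => x ^ 2 = a).card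
        + (univ.filter fun x : ZMod p => ¬ (x ^ 2 = a)).card = p := by
      rw [Finset.card_filter_add_card_filter_not, card_univ, ZMod.card]
    have : ((univ.filter fun x : ZMod p => ¬ (x ^ 2 = a)).card : ℤ)
        = (p : ℤ) - ((univ.filter fun x : ZMod p => x ^ 2 = a).card : ℤ) := by
      have := congrArg (fun n : ℕ => (n : ℤ)) hle
      push_cast at this
      linarith
    rw [nsmul_eq_mul, nsmul_eq_mul, hcard, this, hcard]
    ring
  rw [split, mul_assoc]

lemma card_sphere (hp2 : (ringChar (ZMod p)) ≠ 2) :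
    ((univ.filter fun v : ZMod p × ZMod p × ZMod p =>
      v.1 ^ 2 + v.2.1 ^ 2 + v.2.2 ^ 2 = (-1 : ZMod p)).card : ℤ) = (p : ℤ) ^ 2 + p := by
  have hm1 : (-1 : ZMod p) ≠ 0 := by
    intro h
    have : (1 : ZMod p) = 0 := by linear_combination -h
    exact one_ne_zero this
  have key : ((univ.filter fun v : ZMod p × ZMod p × ZMod p =>
      v.1 ^ 2 + v.2.1 ^ 2 + v.2.2 ^ 2 = (-1 : ZMod p)).card : ℤ)
      = ∑ c : ZMod p, ∑ d : ZMod p,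
        ((quadraticChar (ZMod p) ((-1 : ZMod p) - c ^ 2 - d ^ 2) : ℤ) + 1) := by
    rw [Finset.card_filter]
    rw [← Finset.univ_product_univ, Finset.sum_product]
    push_cast
    congr 1; ext c
    rw [← Finset.univ_product_univ, Finset.sum_product]
    congr 1; ext d
    have : ∑ b : ZMod p, (if c ^ 2 + d ^ 2 + b ^ 2 = (-1 : ZMod p) then (1 : ℤ) else 0)
        = ((univ.filter fun b : ZMod p => b ^ 2 = (-1 : ZMod p) - c ^ 2 - d ^ 2).card : ℤ) := by
      rw [Finset.card_filter]
      push_cast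
      congr 1; ext b
      congr 1
      rw [eq_iff_iff]
      constructor
      · intro h; linear_combination h
      · intro h; linear_combination h
    rw [this, card_sq hp2]
  rw [key]
  have : ∀ c : ZMod p, ∑ d : ZMod p,
      ((quadraticChar (ZMod p) ((-1 : ZMod p) - c ^ 2 - d ^ 2) : ℤ) + 1)
      = (∑ d : ZMod p, (quadraticChar (ZMod p) ((-1 : ZMod p) - c ^ 2 - d ^ 2) : ℤ)) + p := by
    intro c
    rw [Finset.sum_add_distrib, Finset.sum_const, card_univ, ZMod.card, nsmul_eq_mul, mul_one]
  rw [Finset.sum_congr rfl fun c _ => this c, Finset.sum_add_distrib, sum_char_two hp2,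
    Finset.sum_const, card_univ, ZMod.card, nsmul_eq_mul]
  have hsq : (quadraticChar (ZMod p) (-1) : ℤ) * (quadraticChar (ZMod p) (-1) : ℤ) = 1 := by
    rw [← map_mul, neg_mul_neg, one_mul, map_one]
  linear_combination (p : ℤ) * hsq


lemma qsq_re (x : Quaternion (ZMod p)) :
    (x ^ 2).re = x.re ^ 2 - x.imI ^ 2 - x.imJ ^ 2 - x.imK ^ 2 := by
  rw [pow_two]; simp [Quaternion.re_mul]; ring

lemma qsq_imI (x : Quaternion (ZMod p)) : (x ^ 2).imI = 2 * x.re * x.imI := by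
  rw [pow_two]; simp [Quaternion.imI_mul]; ring

lemma qsq_imJ (x : Quaternion (ZMod p)) : (x ^ 2).imJ = 2 * x.re * x.imJ := by
  rw [pow_two]; simp [Quaternion.imJ_mul]; ring

lemma qsq_imK (x : Quaternion (ZMod p)) : (x ^ 2).imK = 2 * x.re * x.imK := by
  rw [pow_two]; simp [Quaternion.imK_mul]; ring

lemma qcube_re (x : Quaternion (ZMod p)) :
    (x ^ 3).re = x.re ^ 3 - 3 * x.re * (x.imI ^ 2 + x.imJ ^ 2 + x.imK ^ 2) := by
  rw [pow_succ, pow_two]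
  simp [Quaternion.re_mul, Quaternion.imI_mul, Quaternion.imJ_mul, Quaternion.imK_mul]
  ring

lemma qcube_imI (x : Quaternion (ZMod p)) :
    (x ^ 3).imI = (3 * x.re ^ 2 - (x.imI ^ 2 + x.imJ ^ 2 + x.imK ^ 2)) * x.imI := by
  rw [pow_succ, pow_two]
  simp [Quaternion.re_mul, Quaternion.imI_mul, Quaternion.imJ_mul, Quaternion.imK_mul]
  ring

lemma qcube_imJ (x : Quaternion (ZMod p)) :
    (x ^ 3).imJ = (3 * x.re ^ 2 - (x.imI ^ 2 + x.imJ ^ 2 + x.imK ^ 2)) * x.imJ := by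
  rw [pow_succ, pow_two]
  simp [Quaternion.re_mul, Quaternion.imI_mul, Quaternion.imJ_mul, Quaternion.imK_mul]
  ring

lemma qcube_imK (x : Quaternion (ZMod p)) :
    (x ^ 3).imK = (3 * x.re ^ 2 - (x.imI ^ 2 + x.imJ ^ 2 + x.imK ^ 2)) * x.imK := by
  rw [pow_succ, pow_two]
  simp [Quaternion.re_mul, Quaternion.imI_mul, Quaternion.imJ_mul, Quaternion.imK_mul]
  ring

lemma tripotent_iff (h2 : (2 : ZMod p) ≠ 0) (x : Quaternion (ZMod p)) :
    (x ^ 3 = x ∧ x ^ 2 ≠ x) ↔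
      (x = -1 ∨ (x.re = 0 ∧ x.imI ^ 2 + x.imJ ^ 2 + x.imK ^ 2 = -1) ∨
        (2 * x.re = -1 ∧ (2 * x.imI) ^ 2 + (2 * x.imJ) ^ 2 + (2 * x.imK) ^ 2 = -1)) := by
  have h4 : (4 : ZMod p) ≠ 0 := by
    intro h4
    rcases mul_eq_zero.mp (show (2 : ZMod p) * 2 = 0 by linear_combination h4) with h' | h'
    · exact h2 h'
    · exact h2 h'
  have h8 : (8 : ZMod p) ≠ 0 := by
    intro h8
    rcases mul_eq_zero.mp (show (2 : ZMod p) * 4 = 0 by linear_combination h8) with h' | h'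
    · exact h2 h'
    · exact h4 h'
  constructor
  · rintro ⟨h3, hne⟩
    rw [Quaternion.ext_iff, qcube_re, qcube_imI, qcube_imJ, qcube_imK] at h3
    obtain ⟨E1, E2, E3, E4⟩ := h3
    by_cases hv : x.imI = 0 ∧ x.imJ = 0 ∧ x.imK = 0
    · obtain ⟨hb0, hc0, hd0⟩ := hv
      left
      rw [hb0, hc0, hd0] at E1
      have ha3 : x.re ^ 3 = x.re := by linear_combination E1
      have hane : x.re ^ 2 ≠ x.re := by
        intro haa
        apply hne
        ext
        · rw [qsq_re, hb0, hc0, hd0]; linear_combination haa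
        · rw [qsq_imI, hb0]; ring
        · rw [qsq_imJ, hc0]; ring
        · rw [qsq_imK, hd0]; ring
      have ha0 : x.re ≠ 0 := fun h => hane (by rw [h]; ring)
      have ha1 : x.re ≠ 1 := fun h => hane (by rw [h]; ring)
      have ham : x.re = -1 := by
        have h1 : x.re * (x.re - 1) * (x.re + 1) = 0 := by linear_combination ha3
        rcases mul_eq_zero.mp h1 with h | h
        · rcases mul_eq_zero.mp h with h | h
          · exact absurd h ha0
          · exact absurd (by linear_combination h) ha1
        · linear_combination h
      ext
      · simpa using ham
      · simpa using hb0
      · simpa using hc0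
      · simpa using hd0
    · have hkey : 3 * x.re ^ 2 - (x.imI ^ 2 + x.imJ ^ 2 + x.imK ^ 2) = 1 := by
        have h' : x.imI ≠ 0 ∨ x.imJ ≠ 0 ∨ x.imK ≠ 0 := by tauto
        rcases h' with h | h | h
        · exact mul_right_cancel₀ h (E2.trans (one_mul x.imI).symm)
        · exact mul_right_cancel₀ h (E3.trans (one_mul x.imJ).symm)
        · exact mul_right_cancel₀ h (E4.trans (one_mul x.imK).symm)
      have hn : x.imI ^ 2 + x.imJ ^ 2 + x.imK ^ 2 = 3 * x.re ^ 2 - 1 := by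
        linear_combination -hkey
      have hfact : 2 * x.re * (1 - 2 * x.re) * (1 + 2 * x.re) = 0 := by
        linear_combination E1 + 3 * x.re * hn
      rcases mul_eq_zero.mp hfact with h | h
      · rcases mul_eq_zero.mp h with h | h
        · have ha0 : x.re = 0 := by
            rcases mul_eq_zero.mp h with h' | h'
            · exact absurd h' h2
            · exact h'
          right; left
          refine ⟨ha0, ?_⟩
          rw [hn, ha0]; ring
        · exfalso
          apply hne
          have h2a : 2 * x.re = 1 := by linear_combination -h
          ext
          · rw [qsq_re]
            linear_combination -hn - (x.re + 1) * h2a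
          · rw [qsq_imI]; linear_combination x.imI * h2a
          · rw [qsq_imJ]; linear_combination x.imJ * h2a
          · rw [qsq_imK]; linear_combination x.imK * h2a
      · right; right
        have h2a : 2 * x.re = -1 := by linear_combination h
        refine ⟨h2a, ?_⟩
        linear_combination 4 * hn + (6 * x.re - 3) * h2a
  · rintro (h | ⟨h1, h2'⟩ | ⟨h1, h2'⟩)
    · constructor
      · rw [h, pow_succ, neg_one_sq, one_mul]
      · rw [h]
        intro hcon
        have hre : ((-1 : Quaternion (ZMod p)) ^ 2).re = (-1 : Quaternion (ZMod p)).re :=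
          congrArg (fun q => q.re) hcon
        rw [qsq_re] at hre
        simp at hre
        exact h2 (by linear_combination hre)
    · constructor
      · ext
        · rw [qcube_re, h1, h2']; ring
        · rw [qcube_imI, h1, h2']; ring
        · rw [qcube_imJ, h1, h2']; ring
        · rw [qcube_imK, h1, h2']; ring
      · intro hcon
        have hre : (x ^ 2).re = x.re := congrArg (fun q => q.re) hcon
        rw [qsq_re, h1] at hre
        have hz : x.imI ^ 2 + x.imJ ^ 2 + x.imK ^ 2 = 0 := by linear_combination -hre
        rw [hz] at h2'
        exact h2 (by linear_combination 2 * h2')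
    · constructor
      · have hq : 3 * x.re ^ 2 - (x.imI ^ 2 + x.imJ ^ 2 + x.imK ^ 2) = 1 := by
          apply mul_left_cancel₀ h4
          linear_combination (6 * x.re - 3) * h1 - h2'
        have he1 : x.re ^ 3 - 3 * x.re * (x.imI ^ 2 + x.imJ ^ 2 + x.imK ^ 2) = x.re := by
          apply mul_left_cancel₀ h8
          linear_combination (4 * x.re ^ 2 - 2 * x.re
            - 12 * (x.imI ^ 2 + x.imJ ^ 2 + x.imK ^ 2) - 3) * h1 + 3 * h2'
        ext
        · rw [qcube_re]; exact he1
        · rw [qcube_imI, hq, one_mul]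
        · rw [qcube_imJ, hq, one_mul]
        · rw [qcube_imK, hq, one_mul]
      · intro hcon
        have hre : (x ^ 2).re = x.re := congrArg (fun q => q.re) hcon
        rw [qsq_re] at hre
        exact h4 (by linear_combination 4 * hre + h2' + (3 - 2 * x.re) * h1)

def qSph (p : ℕ) : Set (ZMod p × ZMod p × ZMod p) :=
  {v | v.1 ^ 2 + v.2.1 ^ 2 + v.2.2 ^ 2 = -1}

def qF2 (p : ℕ) : ZMod p × ZMod p × ZMod p → Quaternion (ZMod p) :=
  fun v => ⟨0, v.1, v.2.1, v.2.2⟩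

def qF3 (p : ℕ) : ZMod p × ZMod p × ZMod p → Quaternion (ZMod p) :=
  fun v => ⟨-(2⁻¹ : ZMod p), 2⁻¹ * v.1, 2⁻¹ * v.2.1, 2⁻¹ * v.2.2⟩

theorem card_tripotent_quaternions (p : ℕ) (hp : p.Prime) (hodd : Odd p) [Fact p.Prime] :
    {x : Quaternion (ZMod p) | x ^ 3 = x ∧ x ^ 2 ≠ x}.ncard = 2 * p ^ 2 + 2 * p + 1 := by
  have hp2 : p ≠ 2 := by
    obtain ⟨k, hk⟩ := hodd
    omega
  have hchar : ringChar (ZMod p) ≠ 2 := by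
    rw [ZMod.ringChar_zmod_n]; exact hp2
  have h2 : (2 : ZMod p) ≠ 0 := Ring.two_ne_zero hchar
  have h2i : (2⁻¹ : ZMod p) ≠ 0 := inv_ne_zero h2
  haveI hfin : Finite (Quaternion (ZMod p)) :=
    Finite.of_equiv _ (Quaternion.equivProd (ZMod p)).symm
  have hS : {x : Quaternion (ZMod p) | x ^ 3 = x ∧ x ^ 2 ≠ x}
      = ({-1} : Set (Quaternion (ZMod p))) ∪ (qF2 p '' qSph p ∪ qF3 p '' qSph p) := by
    ext x
    rw [Set.mem_setOf_eq, tripotent_iff h2 x, Set.mem_union, Set.mem_union,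
      Set.mem_singleton_iff]
    apply or_congr Iff.rfl
    apply or_congr
    · constructor
      · rintro ⟨h1, hs⟩
        refine ⟨(x.imI, x.imJ, x.imK), hs, ?_⟩
        ext
        · exact h1.symm
        · rfl
        · rfl
        · rfl
      · rintro ⟨v, hv, rfl⟩
        exact ⟨rfl, hv⟩
    · constructor
      · rintro ⟨h1, hs⟩
        refine ⟨(2 * x.imI, 2 * x.imJ, 2 * x.imK), hs, ?_⟩
        have hre : -(2⁻¹ : ZMod p) = x.re := by
          apply mul_left_cancel₀ h2
          rw [mul_neg, mul_inv_cancel₀ h2, h1]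
        ext
        · exact hre
        · exact inv_mul_cancel_left₀ h2 x.imI
        · exact inv_mul_cancel_left₀ h2 x.imJ
        · exact inv_mul_cancel_left₀ h2 x.imK
      · rintro ⟨v, hv, rfl⟩
        constructor
        · show 2 * (-(2⁻¹ : ZMod p)) = -1
          rw [mul_neg, mul_inv_cancel₀ h2]
        · show (2 * (2⁻¹ * v.1)) ^ 2 + (2 * (2⁻¹ * v.2.1)) ^ 2 + (2 * (2⁻¹ * v.2.2)) ^ 2 = -1
          rw [mul_inv_cancel_left₀ h2, mul_inv_cancel_left₀ h2, mul_inv_cancel_left₀ h2]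
          exact hv
  have hre2 : ∀ v, (qF2 p v).re = 0 := fun _ => rfl
  have hre3 : ∀ v, (qF3 p v).re = -(2⁻¹ : ZMod p) := fun _ => rfl
  have hinj2 : Function.Injective (qF2 p) := by
    intro v w h
    exact Prod.ext (congrArg (fun q => q.imI) h)
      (Prod.ext (congrArg (fun q => q.imJ) h) (congrArg (fun q => q.imK) h))
  have hinj3 : Function.Injective (qF3 p) := by
    intro v w h
    have hi : 2⁻¹ * v.1 = 2⁻¹ * w.1 := congrArg (fun q => q.imI) h
    have hj : 2⁻¹ * v.2.1 = 2⁻¹ * w.2.1 := congrArg (fun q => q.imJ) h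
    have hk : 2⁻¹ * v.2.2 = 2⁻¹ * w.2.2 := congrArg (fun q => q.imK) h
    exact Prod.ext (mul_left_cancel₀ h2i hi)
      (Prod.ext (mul_left_cancel₀ h2i hj) (mul_left_cancel₀ h2i hk))
  have hsph : (qSph p).ncard = p ^ 2 + p := by
    classical
    have h1 : (qSph p).ncard = (univ.filter fun v : ZMod p × ZMod p × ZMod p =>
        v.1 ^ 2 + v.2.1 ^ 2 + v.2.2 ^ 2 = (-1 : ZMod p)).card := by
      rw [Set.ncard_eq_toFinset_card']
      congr 1
      ext v
      rw [Set.mem_toFinset]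
      simp [qSph]
    have h2' := card_sphere (p := p) hchar
    rw [h1]
    exact_mod_cast h2'
  have hd23 : Disjoint (qF2 p '' qSph p) (qF3 p '' qSph p) := by
    rw [Set.disjoint_left]
    rintro x ⟨v, _, rfl⟩ ⟨w, _, hw⟩
    have : -(2⁻¹ : ZMod p) = 0 := by
      rw [← hre3 w, hw, hre2]
    exact h2i (neg_eq_zero.mp this)
  have hd1 : Disjoint ({-1} : Set (Quaternion (ZMod p))) (qF2 p '' qSph p ∪ qF3 p '' qSph p) := by
    rw [Set.disjoint_left]
    rintro x hx (⟨v, _, rfl⟩ | ⟨v, _, rfl⟩)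
    · rw [Set.mem_singleton_iff] at hx
      have : (qF2 p v).re = (-1 : Quaternion (ZMod p)).re := congrArg (fun q => q.re) hx
      rw [hre2] at this
      simp at this
    · rw [Set.mem_singleton_iff] at hx
      have : (qF3 p v).re = (-1 : Quaternion (ZMod p)).re := congrArg (fun q => q.re) hx
      rw [hre3] at this
      simp only [Quaternion.re_neg, Quaternion.re_one] at this
      have h1 : (2⁻¹ : ZMod p) = 1 := neg_injective this
      have hcon : (2 : ZMod p) = 1 := by
        conv_lhs => rw [← mul_one (2 : ZMod p), ← h1]
        exact mul_inv_cancel₀ h2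
      exact one_ne_zero (α := ZMod p) (by linear_combination hcon)
  rw [hS, Set.ncard_union_eq hd1 (Set.toFinite _) (Set.toFinite _),
    Set.ncard_union_eq hd23 (Set.toFinite _) (Set.toFinite _),
    Set.ncard_singleton, Set.ncard_image_of_injective _ hinj2,
    Set.ncard_image_of_injective _ hinj3, hsph]
  ring
end
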